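/- In the same setting, if α ≥ s then M_{α,p} is bounded from L^p(Ω) to L^∞(∂Ω): M_{α,p} f(z) ≤ C ‖f‖_{L^p(Ω)} for every z ∈ ∂Ω. Moreover, for α ∈ [θ, s), M_{α,p} is bounded from weak-L^{ps/α}(Ω) to L^∞(∂Ω). -/

import Mathlib

/-!
At `z ∈ ∂Ω` and an admissible radius `r`, the lower mass bound `μ(B(z,r) ∩ Ω) ≥ c_s r^s` lets one
replace each average in `M_{α,p} f(z)` by an integral divided by `c_s r^s`.

If `α ≥ s`, bounding the local integral of `|f|^p` by the global one leaves the factor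
`r^(α-s) ≤ (2 diam ∂Ω)^(α-s)`.

If `α < s`, put `q = ps/α > p`. On a set of measure `m ≥ c`, a function with weak-`L^q`
quasinorm `M` satisfies `⨍ |f|^p ≤ q/(q-p) · M^p c^(-p/q)` (Kolmogorov's inequality: cut the
layer-cake integral at height `M c^(-1/q)`, using `m` below and `(M/t)^q` above). With
`c = c_s r^s` the factor `r^α (c_s r^s)^(-α/s) = c_s^(-α/s)` no longer depends on `r`.
-/

open MeasureTheory Metric Set ENNReal

variable {X : Type*} [MeasurableSpace X] [PseudoMetricSpace X]

/-- The fractional maximal operator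
`M_{α,p} f(z) = sup_{0<r<2 diam F} (r^α ⨍_{B(z,r)∩Ω} |f|^p dμ)^{1/p}`. -/
noncomputable def fracMax (μ : Measure X) (Ω F : Set X) (α p : ℝ)
    (f : X → ℝ) (z : X) : ℝ :=
  ⨆ r ∈ Set.Ioo (0 : ℝ) (2 * diam F),
    (r ^ α * ⨍ x in Metric.ball z r ∩ Ω, |f x| ^ p ∂μ) ^ (1 / p)

section WeakLp

variable {Y : Type*} [MeasurableSpace Y]

theorem lintegral_Ioc_ofReal_rpow_sub_one {p b : ℝ} (hp : 0 < p) (hb : 0 ≤ b) :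
    ∫⁻ t in Ioc 0 b, ENNReal.ofReal (t ^ (p - 1)) = ENNReal.ofReal (b ^ p / p) := by
  rw [← ofReal_integral_eq_lintegral_ofReal
      (intervalIntegral.intervalIntegrable_rpow' (by linarith)).1
      (ae_restrict_of_forall_mem measurableSet_Ioc fun t ht => Real.rpow_nonneg ht.1.le _),
    ← intervalIntegral.integral_of_le hb, integral_rpow (Or.inl (by linarith)),
    sub_add_cancel, Real.zero_rpow hp.ne', sub_zero]

theorem lintegral_Ioi_ofReal_rpow_of_lt {a c : ℝ} (ha : a < -1) (hc : 0 < c) :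
    ∫⁻ t in Ioi c, ENNReal.ofReal (t ^ a) = ENNReal.ofReal (-c ^ (a + 1) / (a + 1)) := by
  rw [← integral_Ioi_rpow_of_lt ha hc, ofReal_integral_eq_lintegral_ofReal
    (integrableOn_Ioi_rpow_of_lt ha hc)
    (ae_restrict_of_forall_mem measurableSet_Ioi fun t ht => Real.rpow_nonneg (hc.trans ht).le _)]

theorem lintegral_ofReal_rpow_le_of_meas_lt_le {ν : Measure Y} {g : Y → ℝ}
    (hg0 : 0 ≤ᵐ[ν] g) (hg : AEMeasurable g ν) {p q A b : ℝ} (hp : 0 < p) (hpq : p < q)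
    (hA : 0 ≤ A) (hb : 0 < b)
    (hdist : ∀ t > 0, ν {x | t < g x} ≤ ENNReal.ofReal (A * t ^ (-q))) :
    ∫⁻ x, ENNReal.ofReal (g x ^ p) ∂ν ≤
      ν univ * ENNReal.ofReal (b ^ p) + ENNReal.ofReal (p / (q - p) * A * b ^ (p - q)) := by
  have low : ∫⁻ t in Ioc 0 b, ν {x | t < g x} * ENNReal.ofReal (t ^ (p - 1))
      ≤ ν univ * ENNReal.ofReal (b ^ p / p) := by
    rw [← lintegral_Ioc_ofReal_rpow_sub_one hp hb.le, ← lintegral_const_mul _ (by fun_prop)]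
    exact lintegral_mono fun t => mul_le_mul_left (measure_mono (subset_univ _)) _
  have high : ∫⁻ t in Ioi b, ν {x | t < g x} * ENNReal.ofReal (t ^ (p - 1))
      ≤ ENNReal.ofReal A * ENNReal.ofReal (-b ^ (p - q) / (p - q)) := by
    have hexp : p - 1 - q + 1 = p - q := by ring
    rw [← hexp, ← lintegral_Ioi_ofReal_rpow_of_lt (by linarith) hb,
      ← lintegral_const_mul' _ _ ofReal_ne_top]
    refine setLIntegral_mono' measurableSet_Ioi fun t ht => ?_
    have ht0 : 0 < (t : ℝ) := hb.trans ht
    calc ν {x | t < g x} * ENNReal.ofReal (t ^ (p - 1))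
        ≤ ENNReal.ofReal (A * t ^ (-q)) * ENNReal.ofReal (t ^ (p - 1)) := by
          gcongr; exact hdist t ht0
      _ = ENNReal.ofReal A * ENNReal.ofReal (t ^ (p - 1 - q)) := by
        rw [← ofReal_mul hA, ← ofReal_mul (by positivity), mul_assoc, ← Real.rpow_add ht0]
        ring_nf
  rw [lintegral_rpow_eq_lintegral_meas_lt_mul ν hg0 hg hp, ← Ioc_union_Ioi_eq_Ioi hb.le,
    lintegral_union measurableSet_Ioi (Ioc_disjoint_Ioi le_rfl), mul_add]
  gcongr ?_ + ?_
  · calc ENNReal.ofReal p * ∫⁻ t in Ioc 0 b, ν {x | t < g x} * ENNReal.ofReal (t ^ (p - 1))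
        ≤ ENNReal.ofReal p * (ν univ * ENNReal.ofReal (b ^ p / p)) := by gcongr
      _ = ν univ * ENNReal.ofReal (b ^ p) := by
        rw [mul_left_comm, ← ofReal_mul hp.le, mul_div_cancel₀ _ hp.ne']
  · calc ENNReal.ofReal p * ∫⁻ t in Ioi b, ν {x | t < g x} * ENNReal.ofReal (t ^ (p - 1))
        ≤ ENNReal.ofReal p * (ENNReal.ofReal A * ENNReal.ofReal (-b ^ (p - q) / (p - q))) := by
          gcongr
      _ = ENNReal.ofReal (p / (q - p) * A * b ^ (p - q)) := by
        rw [← ofReal_mul hA, ← ofReal_mul hp.le]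
        congr 1
        rw [neg_div, ← div_neg, neg_sub]
        ring

theorem ENNReal.le_ofReal_rpow_mul_rpow_neg_of_ofReal_mul_rpow_inv_le {a : ℝ≥0∞} {t q M : ℝ}
    (ht : 0 < t) (hq : 0 < q) (hM : 0 ≤ M) (h : ENNReal.ofReal t * a ^ q⁻¹ ≤ ENNReal.ofReal M) :
    a ≤ ENNReal.ofReal (M ^ q * t ^ (-q)) := by
  have h' : a ^ q⁻¹ ≤ ENNReal.ofReal (M / t) := by
    rw [ofReal_div_of_pos ht, ENNReal.le_div_iff_mul_le (Or.inl (by simpa using ht))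
      (Or.inl ofReal_ne_top), mul_comm]
    exact h
  rwa [ENNReal.rpow_inv_le_iff hq, ofReal_rpow_of_nonneg (div_nonneg hM ht.le) hq.le,
    Real.div_rpow hM ht.le, div_eq_mul_inv, ← Real.rpow_neg ht.le] at h'

theorem setAverage_le_setIntegral_div {μ : Measure Y} {s : Set Y} {g : Y → ℝ} {c : ℝ}
    (hg : 0 ≤ᵐ[μ.restrict s] g) (hc : 0 < c) (hμs : ENNReal.ofReal c ≤ μ s) :
    ⨍ x in s, g x ∂μ ≤ (∫ x in s, g x ∂μ) / c := by
  have hI : 0 ≤ ∫ x in s, g x ∂μ := integral_nonneg_of_ae hg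
  rw [setAverage_eq, smul_eq_mul, div_eq_inv_mul]
  rcases eq_top_or_lt_top (μ s) with htop | hfin
  -- junk value: the average over a set of infinite measure is `0`
  · rw [measureReal_def, htop, toReal_top, _root_.inv_zero, zero_mul]
    positivity
  · have hcm : c ≤ μ.real s := by
      rw [measureReal_def, ← ofReal_le_iff_le_toReal hfin.ne]; exact hμs
    gcongr

theorem setAverage_rpow_abs_le_of_weakLp {μ : Measure Y} {s : Set Y} {f : Y → ℝ}
    {p q c M : ℝ} (hp : 0 < p) (hpq : p < q) (hc : 0 < c) (hμs : ENNReal.ofReal c ≤ μ s)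
    (hM : 0 < M)
    (hweak : ∀ t > 0, ENNReal.ofReal t * μ.restrict s {x | t < |f x|} ^ q⁻¹ ≤ ENNReal.ofReal M) :
    ⨍ x in s, |f x| ^ p ∂μ ≤ q / (q - p) * c ^ (-(p / q)) * M ^ p := by
  have hq : 0 < q := hp.trans hpq
  have hqp : 0 < q - p := sub_pos.2 hpq
  have hbound : 0 ≤ q / (q - p) * c ^ (-(p / q)) * M ^ p := by positivity
  rw [setAverage_eq, smul_eq_mul]
  by_cases hint : Integrable (fun x => |f x| ^ p) (μ.restrict s)
  swap
  · rwa [integral_undef hint, mul_zero]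
  rcases eq_top_or_lt_top (μ s) with htop | hfin
  · rwa [measureReal_def, htop, toReal_top, _root_.inv_zero, zero_mul]
  have hcm : c ≤ μ.real s := by
    rw [measureReal_def, ← ofReal_le_iff_le_toReal hfin.ne]; exact hμs
  have hf : AEMeasurable (fun x => |f x|) (μ.restrict s) :=
    (hint.aemeasurable.pow_const p⁻¹).congr
      (ae_of_all _ fun x => Real.rpow_rpow_inv (abs_nonneg _) hp.ne')
  -- the height at which the two terms of the layer-cake bound balance
  set b := M * c ^ (-q⁻¹)
  have hb : 0 < b := by positivity
  have hlayer := lintegral_ofReal_rpow_le_of_meas_lt_le (ae_of_all _ fun x => abs_nonneg (f x)) hf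
    hp hpq (by positivity) hb fun t ht =>
      le_ofReal_rpow_mul_rpow_neg_of_ofReal_mul_rpow_inv_le ht hq hM.le (hweak t ht)
  rw [← ofReal_integral_eq_lintegral_ofReal hint (ae_of_all _ fun x => by positivity),
    Measure.restrict_apply_univ, ← ofReal_toReal hfin.ne, ← ofReal_mul (by positivity),
    ← ofReal_add (by positivity) (by positivity),
    ofReal_le_ofReal_iff (by positivity), ← measureReal_def] at hlayer
  have hbp : b ^ p = M ^ p * c ^ (-(p / q)) := by
    rw [Real.mul_rpow hM.le (by positivity), ← Real.rpow_mul hc.le]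
    ring_nf
  have hbpq : M ^ q * b ^ (p - q) / c = M ^ p * c ^ (-(p / q)) := by
    rw [Real.mul_rpow hM.le (by positivity), ← Real.rpow_mul hc.le, ← mul_assoc,
      ← Real.rpow_add hM, add_sub_cancel, mul_div_assoc, ← Real.rpow_sub_one hc.ne']
    congr 2
    field_simp
    ring
  have hm : 0 < μ.real s := hc.trans_le hcm
  calc (μ.real s)⁻¹ * ∫ x in s, |f x| ^ p ∂μ
      ≤ (μ.real s)⁻¹ * (μ.real s * b ^ p + p / (q - p) * M ^ q * b ^ (p - q)) := by gcongr
    _ = b ^ p + p / (q - p) * (M ^ q * b ^ (p - q) / μ.real s) := by field_simp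
    _ ≤ b ^ p + p / (q - p) * (M ^ q * b ^ (p - q) / c) := by gcongr
    _ = q / (q - p) * c ^ (-(p / q)) * M ^ p := by
      rw [hbp, hbpq]
      field_simp
      ring

end WeakLp

section FracMax

variable {μ : Measure X} {Ω F : Set X} {α p : ℝ} {f : X → ℝ} {z : X}

theorem fracMax_le {B : ℝ} (hp : 0 < p) (hB : 0 ≤ B)
    (h : ∀ r ∈ Ioo 0 (2 * diam F), r ^ α * ⨍ x in ball z r ∩ Ω, |f x| ^ p ∂μ ≤ B ^ p) :
    fracMax μ Ω F α p f z ≤ B := by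
  refine Real.iSup_le (fun r => Real.iSup_le (fun hr => ?_) hB) hB
  have hnonneg : 0 ≤ r ^ α * ⨍ x in ball z r ∩ Ω, |f x| ^ p ∂μ := by
    rw [setAverage_eq, smul_eq_mul]
    have hr0 := hr.1
    exact mul_nonneg (by positivity)
      (mul_nonneg (by positivity) (integral_nonneg fun x => by positivity))
  calc (r ^ α * ⨍ x in ball z r ∩ Ω, |f x| ^ p ∂μ) ^ (1 / p)
      ≤ (B ^ p) ^ (1 / p) := by gcongr; exact h r hr
    _ = B := by rw [one_div, Real.rpow_rpow_inv hB hp.ne']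

variable {s cs : ℝ}

theorem fracMax_le_of_integrableOn (hp : 0 < p) (hsα : s ≤ α) (hcs : 0 < cs)
    (hmass : ∀ r ∈ Ioo 0 (2 * diam F), ENNReal.ofReal (cs * r ^ s) ≤ μ (ball z r ∩ Ω))
    (hf : IntegrableOn (fun x => |f x| ^ p) Ω μ) :
    fracMax μ Ω F α p f z ≤
      (max 1 ((2 * diam F) ^ (α - s)) / cs) ^ p⁻¹ * (∫ x in Ω, |f x| ^ p ∂μ) ^ p⁻¹ := by
  have hI : 0 ≤ ∫ x in Ω, |f x| ^ p ∂μ := integral_nonneg fun x => by positivity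
  refine fracMax_le hp (by positivity) fun r hr => ?_
  rw [Real.mul_rpow (by positivity) (by positivity), Real.rpow_inv_rpow (by positivity) hp.ne',
    Real.rpow_inv_rpow hI hp.ne']
  have hr0 := hr.1
  calc r ^ α * ⨍ x in ball z r ∩ Ω, |f x| ^ p ∂μ
      ≤ r ^ α * ((∫ x in ball z r ∩ Ω, |f x| ^ p ∂μ) / (cs * r ^ s)) := by
        gcongr
        exact setAverage_le_setIntegral_div (ae_of_all _ fun x => by positivity) (by positivity)
          (hmass r hr)
    _ ≤ r ^ α * ((∫ x in Ω, |f x| ^ p ∂μ) / (cs * r ^ s)) := by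
        gcongr r ^ α * (?_ / _)
        exact setIntegral_mono_set hf (ae_of_all _ fun x => by positivity)
          (Filter.Eventually.of_forall inter_subset_right)
    _ = r ^ (α - s) / cs * ∫ x in Ω, |f x| ^ p ∂μ := by
        rw [Real.rpow_sub hr0]
        field_simp
    _ ≤ max 1 ((2 * diam F) ^ (α - s)) / cs * ∫ x in Ω, |f x| ^ p ∂μ := by
        gcongr
        exact (Real.rpow_le_rpow hr0.le hr.2.le (sub_nonneg.2 hsα)).trans (le_max_right _ _)

theorem fracMax_le_of_weakLp (hp : 0 < p) (hα : 0 < α) (hαs : α < s) (hcs : 0 < cs)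
    (hmass : ∀ r ∈ Ioo 0 (2 * diam F), ENNReal.ofReal (cs * r ^ s) ≤ μ (ball z r ∩ Ω))
    {M : ℝ} (hM : 0 < M)
    (hweak : ∀ t > 0, ENNReal.ofReal t * (μ.restrict Ω) {x | t < |f x|} ^ (α / (p * s))
      ≤ ENNReal.ofReal M) :
    fracMax μ Ω F α p f z ≤ (s / (s - α) * cs ^ (-(α / s))) ^ p⁻¹ * M := by
  have hs : 0 < s := hα.trans hαs
  set q := p * s / α
  have hpq : p < q := by rw [lt_div_iff₀ hα]; nlinarith
  have hq_inv : α / (p * s) = q⁻¹ := by simp only [q]; field_simp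
  have hpq_eq : p / q = α / s := by simp only [q]; field_simp
  have hK : q / (q - p) = s / (s - α) := by
    simp only [q]
    rw [mul_div_assoc, ← mul_sub_one, mul_div_mul_left _ _ hp.ne', div_sub_one hα.ne',
      div_div_div_cancel_right₀ hα.ne']
  refine fracMax_le hp (by positivity) fun r hr => ?_
  have hr0 := hr.1
  rw [Real.mul_rpow (by positivity) hM.le, Real.rpow_inv_rpow (by positivity) hp.ne']
  have havg := setAverage_rpow_abs_le_of_weakLp hp hpq (by positivity) (hmass r hr) hM
    fun t ht => (hq_inv ▸ hweak t ht).trans' <| by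
      gcongr
      exact inter_subset_right
  calc r ^ α * ⨍ x in ball z r ∩ Ω, |f x| ^ p ∂μ
      ≤ r ^ α * (q / (q - p) * (cs * r ^ s) ^ (-(p / q)) * M ^ p) := by gcongr
    _ = s / (s - α) * cs ^ (-(α / s)) * M ^ p := by
      rw [hpq_eq, hK, Real.mul_rpow hcs.le (by positivity), ← Real.rpow_mul hr0.le,
        mul_neg, mul_div_cancel₀ _ hs.ne', Real.rpow_neg hr0.le]
      field_simp

end FracMax

theorem fracMax_linfty_bounds_general {μ : Measure X} {Ω : Set X}
    (s cs : ℝ) (hcs : 0 < cs)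
    (hmass : ∀ z ∈ closure Ω, ∀ r : ℝ, 0 < r → r < 2 * diam (frontier Ω) →
      ENNReal.ofReal (cs * r ^ s) ≤ μ (ball z r ∩ Ω))
    (θ p α : ℝ) (hθ : 0 < θ) (hθα : θ ≤ α) (hp : 1 ≤ p) :
    (s ≤ α →
      ∃ C : ℝ, 0 < C ∧ ∀ f : X → ℝ, MemLp f (ENNReal.ofReal p) (μ.restrict Ω) →
        ∀ z ∈ frontier Ω,
          ENNReal.ofReal (fracMax μ Ω (frontier Ω) α p f z)
            ≤ ENNReal.ofReal C * eLpNorm f (ENNReal.ofReal p) (μ.restrict Ω)) ∧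
    (α < s →
      ∃ C : ℝ, 0 < C ∧ ∀ (f : X → ℝ) (M : ℝ), 0 ≤ M →
        (∀ lam : ℝ, 0 < lam →
          ENNReal.ofReal lam *
              (μ.restrict Ω) {x | lam < |f x|} ^ (α / (p * s)) ≤ ENNReal.ofReal M) →
        ∀ z ∈ frontier Ω, fracMax μ Ω (frontier Ω) α p f z ≤ C * M) := by
  have hp0 : 0 < p := by linarith
  have hα : 0 < α := hθ.trans_le hθα
  have hmass' : ∀ z ∈ frontier Ω, ∀ r ∈ Ioo 0 (2 * diam (frontier Ω)),
      ENNReal.ofReal (cs * r ^ s) ≤ μ (ball z r ∩ Ω) :=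
    fun z hz r hr => hmass z (frontier_subset_closure hz) r hr.1 hr.2
  refine ⟨fun hsα => ?_, fun hαs => ?_⟩
  · refine ⟨(max 1 ((2 * diam (frontier Ω)) ^ (α - s)) / cs) ^ p⁻¹, by positivity,
      fun f hf z hz => ?_⟩
    have hp' : ENNReal.ofReal p ≠ 0 := by simpa using hp0
    have hint := hf.integrable_norm_rpow hp' ofReal_ne_top
    rw [hf.eLpNorm_eq_integral_rpow_norm hp' ofReal_ne_top, ← ofReal_mul (by positivity)]
    simp only [toReal_ofReal hp0.le, Real.norm_eq_abs] at hint ⊢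
    exact ofReal_le_ofReal (fracMax_le_of_integrableOn hp0 hsα hcs (hmass' z hz) hint)
  · set C := (s / (s - α) * cs ^ (-(α / s))) ^ p⁻¹
    have hC : 0 < C := Real.rpow_pos_of_pos (mul_pos (div_pos (hα.trans hαs) (sub_pos.2 hαs))
      (Real.rpow_pos_of_pos hcs _)) _
    refine ⟨C, hC, fun f M hM hweak z hz => _root_.le_of_forall_pos_le_add fun ε hε => ?_⟩
    -- pass to `M + ε / C > 0`, which avoids the degenerate case `M = 0`
    calc fracMax μ Ω (frontier Ω) α p f z ≤ C * (M + ε / C) :=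
          fracMax_le_of_weakLp hp0 hα hαs hcs (hmass' z hz) (by positivity) fun t ht =>
            (hweak t ht).trans (ofReal_le_ofReal (by linarith [div_pos hε hC]))
      _ = C * M + ε := by field_simp

/-- In the same setting: if `α ≥ s` then `M_{α,p} : L^p(Ω) → L^∞(∂Ω)` is bounded
pointwise everywhere on `∂Ω`; and for `θ ≤ α < s`, `M_{α,p}` is bounded from
`weak-L^{ps/α}(Ω)` to `L^∞(∂Ω)`. -/
theorem fracMax_linfty_bounds {μ : Measure X} {Ω : Set X}
    (hΩopen : IsOpen Ω) (hΩconn : IsConnected Ω)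
    (hΩbdd : Bornology.IsBounded Ω)
    (Cd : ℝ≥0∞) (hCd : Cd < ∞)
    (hdbl : ∀ x ∈ closure Ω, ∀ r : ℝ, 0 < r →
      μ (ball x (2 * r) ∩ Ω) ≤ Cd * μ (ball x r ∩ Ω) ∧
        0 < μ (ball x r ∩ Ω) ∧ μ (ball x r ∩ Ω) < ∞)
    (s cs : ℝ) (hcs : 0 < cs)
    (hmass : ∀ z ∈ closure Ω, ∀ r : ℝ, 0 < r → r < 2 * diam (frontier Ω) →
      ENNReal.ofReal (cs * r ^ s) ≤ μ (ball z r ∩ Ω))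
    (θ p α : ℝ) (hθ : 0 < θ) (hθα : θ ≤ α) (hp : 1 ≤ p) :
    (s ≤ α →
      ∃ C : ℝ, 0 < C ∧ ∀ f : X → ℝ, MemLp f (ENNReal.ofReal p) (μ.restrict Ω) →
        ∀ z ∈ frontier Ω,
          ENNReal.ofReal (fracMax μ Ω (frontier Ω) α p f z)
            ≤ ENNReal.ofReal C * eLpNorm f (ENNReal.ofReal p) (μ.restrict Ω)) ∧
    (α < s →
      ∃ C : ℝ, 0 < C ∧ ∀ (f : X → ℝ) (M : ℝ), 0 ≤ M →
        (∀ lam : ℝ, 0 < lam →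
          ENNReal.ofReal lam *
              (μ.restrict Ω) {x | lam < |f x|} ^ (α / (p * s)) ≤ ENNReal.ofReal M) →
        ∀ z ∈ frontier Ω, fracMax μ Ω (frontier Ω) α p f z ≤ C * M) :=
  fracMax_linfty_bounds_general s cs hcs hmass θ p α hθ hθα hp
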